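/- Let D be a digraph such that every proper induced subdigraph of D satisfies the α-property. If α(D) ≥ |V(D)|/2, then D satisfies the α-property. -/

import Mathlib

open Set

namespace Paper

variable {V : Type*}

/-- `u` and `v` are adjacent in the underlying graph of the digraph `E`. -/
def Adj (E : V → V → Prop) (u v : V) : Prop := E u v ∨ E v u

/-- A stable set: pairwise non-adjacent vertices. -/
def Stable (E : V → V → Prop) (S : Set V) : Prop :=
  ∀ u ∈ S, ∀ v ∈ S, u ≠ v → ¬ Adj E u v

/-- A stable set of the subdigraph induced by `W`. -/
def StableOn (E : V → V → Prop) (W S : Set V) : Prop := S ⊆ W ∧ Stable E S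

/-- A maximum stable set of the subdigraph induced by `W`. -/
def MaxStableOn (E : V → V → Prop) (W S : Set V) : Prop :=
  StableOn E W S ∧ ∀ T, StableOn E W T → T.ncard ≤ S.ncard

/-- Neighborhood of `S`: vertices outside `S` adjacent to some vertex of `S`. -/
def Nbhd (E : V → V → Prop) (S : Set V) : Set V :=
  {v | v ∉ S ∧ ∃ u ∈ S, Adj E u v}

/-- A (nonempty) directed path, as a list of vertices. -/
def IsPath (E : V → V → Prop) (p : List V) : Prop := p ≠ [] ∧ p.Chain' E

/-- A path partition of the vertex set `W` into vertex-disjoint directed paths. -/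
def PathPartitionOn (E : V → V → Prop) (W : Set V) (P : List (List V)) : Prop :=
  (∀ p ∈ P, IsPath E p) ∧ P.flatten.Nodup ∧ ∀ v, v ∈ P.flatten ↔ v ∈ W

/-- `S` and `P` are orthogonal: each path contains exactly one vertex of `S`. -/
def Orthogonal (S : Set V) (P : List (List V)) : Prop :=
  ∀ p ∈ P, ∃! v, v ∈ p ∧ v ∈ S

/-- An `S`-path partition of `W`. -/
def SPartOn (E : V → V → Prop) (W S : Set V) (P : List (List V)) : Prop :=
  PathPartitionOn E W P ∧ Orthogonal S P

/-- An `S_BE`-path partition of `W`: orthogonal and every vertex of `S` starts or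
ends its path. -/
def BEPartOn (E : V → V → Prop) (W S : Set V) (P : List (List V)) : Prop :=
  SPartOn E W S P ∧ ∀ p ∈ P, ∀ v ∈ p, v ∈ S → p.head? = some v ∨ p.getLast? = some v

/-- The induced subdigraph on `W` satisfies the α-property. -/
def AlphaPropOn (E : V → V → Prop) (W : Set V) : Prop :=
  ∀ S, MaxStableOn E W S → ∃ P, SPartOn E W S P

/-- The induced subdigraph on `W` satisfies the BE-property. -/
def BEPropOn (E : V → V → Prop) (W : Set V) : Prop :=
  ∀ S, MaxStableOn E W S → ∃ P, BEPartOn E W S P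

/-- A matching (w.r.t. a symmetric-or-not adjacency `A`) whose edges go from `X`
to `Y`: pairwise vertex-disjoint edges. -/
def MatchingBetween (A : V → V → Prop) (X Y : Set V) (M : Set (V × V)) : Prop :=
  (∀ e ∈ M, e.1 ∈ X ∧ e.2 ∈ Y ∧ A e.1 e.2) ∧
  (∀ e ∈ M, ∀ f ∈ M, e ≠ f →
    e.1 ≠ f.1 ∧ e.1 ≠ f.2 ∧ e.2 ≠ f.1 ∧ e.2 ≠ f.2)

/-- The matching `M` covers the set `X`. -/
def Covers (M : Set (V × V)) (X : Set V) : Prop :=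
  ∀ x ∈ X, ∃ e ∈ M, e.1 = x ∨ e.2 = x

/-- Arc-locally in-semicomplete digraph. -/
def ArcLocallyInSemicomplete (E : V → V → Prop) : Prop :=
  ∀ u v, E u v → ∀ a b, E a u → E b v → a = b ∨ Adj E a b

/-- `A ↦ B`: every vertex of `A` dominates every vertex of `B`, and no edge from
`B` to `A`. -/
def Domin (E : V → V → Prop) (A B : Set V) : Prop :=
  (∀ a ∈ A, ∀ b ∈ B, E a b) ∧ ∀ a ∈ A, ∀ b ∈ B, ¬ E b a

/-- `A ⇒ B`: there is no edge from `B` to `A`. -/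
def NoBack (E : V → V → Prop) (A B : Set V) : Prop :=
  ∀ a ∈ A, ∀ b ∈ B, ¬ E b a

/-- The induced subdigraph on `W` has bipartite underlying graph. -/
def BipartiteOn (E : V → V → Prop) (W : Set V) : Prop :=
  ∃ A B : Set V, A ∪ B = W ∧ Disjoint A B ∧
    (∀ u ∈ A, ∀ v ∈ A, ¬ Adj E u v) ∧ (∀ u ∈ B, ∀ v ∈ B, ¬ Adj E u v)

/-- There is a directed walk of length `n` from `u` to `v`. -/
def WalkLen (E : V → V → Prop) : ℕ → V → V → Prop
  | 0, u, v => u = v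
  | n+1, u, v => ∃ w, E u w ∧ WalkLen E n w v

/-- The set of vertices at distance exactly `d` from the set `A`. -/
def Nd (E : V → V → Prop) (A : Set V) (d : ℕ) : Set V :=
  {v | (∃ u ∈ A, WalkLen E d u v) ∧ ∀ d' < d, ¬ ∃ u ∈ A, WalkLen E d' u v}

/-- Out-neighborhood of a set: vertices outside `A` dominated by some vertex of `A`. -/
def NplusSet (E : V → V → Prop) (A : Set V) : Set V :=
  {v | v ∉ A ∧ ∃ u ∈ A, E u v}

/-- The induced subdigraph on `W` is the extended cycle `Q[X 0, …, X (k-1)]`. -/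
def ExtCycleOn (E : V → V → Prop) (k : ℕ) (X : ZMod k → Set V) (W : Set V) : Prop :=
  (⋃ i, X i) = W ∧ (∀ i j, i ≠ j → Disjoint (X i) (X j)) ∧
  (∀ i, (X i).Nonempty) ∧ (∀ i, Stable E (X i)) ∧
  (∀ u ∈ W, ∀ v ∈ W, (E u v ↔ ∃ i, u ∈ X i ∧ v ∈ X (i + 1)))

/-- The partition `(V₁,V₂,V₃)` from the structure theorem for arc-locally
in-semicomplete digraphs, with `D[V₂]` an odd extended cycle of length `k ≥ 5`. -/
def StructPartition (E : V → V → Prop) (V1 V2 V3 : Set V)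
    (k : ℕ) (X : ZMod k → Set V) : Prop :=
  V1 ∪ V2 ∪ V3 = Set.univ ∧ Disjoint V1 V2 ∧ Disjoint V1 V3 ∧ Disjoint V2 V3 ∧
  Domin E V1 V2 ∧ NoBack E V1 V3 ∧ NoBack E V2 V3 ∧
  5 ≤ k ∧ Odd k ∧ ExtCycleOn E k X V2 ∧ BipartiteOn E V3

/-- `D` contains an induced blocking odd cycle. -/
def HasInducedBlockingOddCycle (E : V → V → Prop) : Prop :=
  ∃ n : ℕ, Odd n ∧ 3 ≤ n ∧ ∃ f : ZMod n → V, Function.Injective f ∧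
    (∀ i j : ZMod n, Adj E (f i) (f j) ↔ (j = i + 1 ∨ i = j + 1)) ∧
    (∀ i, ¬ E (f i) (f 0)) ∧ (∀ i, ¬ E (f 1) (f i))

/-- Stability number of the induced subdigraph on `W`. -/
noncomputable def alphaOn (E : V → V → Prop) (W : Set V) : ℕ :=
  sSup {n | ∃ S, StableOn E W S ∧ S.ncard = n}

end Paper

/-!
Let `S` be a maximum stable set and `R = V \ S`, so that `|R| ≤ |S|`. Choose `A ⊆ R` maximising
the deficiency `|A| - |N_S(A)|`, where `N_S(A)` is the set of vertices of `S` adjacent to `A`.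
Exchanging `N_S(A)` inside `S` for a stable subset of `A ∪ N_S(A)` shows that `N_S(A)` is a maximum
stable set of `D[A ∪ N_S(A)]`. That subdigraph is proper unless the deficiency of `A` is `≤ 0`, in
which case `A = ∅` maximises it as well; so it has an `N_S(A)`-path partition. Maximality of the
deficiency is Hall's condition for a matching of `R \ A` into `S \ N_S(A)`; the matching edges, as
paths with two vertices, and the unmatched vertices of `S`, as trivial paths, complete the partition.
-/

namespace Paper

theorem exists_injOn_mapsTo_of_forall_ncard_le {α : Type*} [Finite α] {X Y : Set α}
    (r : α → α → Prop) (h : ∀ B ⊆ X, B.ncard ≤ {y ∈ Y | ∃ x ∈ B, r x y}.ncard) :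
    ∃ f : α → α, InjOn f X ∧ MapsTo f X Y ∧ ∀ x ∈ X, r x (f x) := by
  classical
  have : Fintype Y := Fintype.ofFinite Y
  obtain ⟨g, hg, hgr⟩ := (Fintype.all_card_le_filter_rel_iff_exists_injective
    (fun (x : X) (y : Y) => r x y)).1 fun A => by
      have hA := h (Subtype.val '' (A : Set X)) (by simp)
      rw [ncard_image_of_injective _ Subtype.val_injective, ncard_coe_finset] at hA
      refine hA.trans_eq ?_
      rw [← ncard_coe_finset, ← ncard_image_of_injective _ Subtype.val_injective]
      congr 1
      ext y
      simp [and_comm]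
  refine ⟨fun x => if hx : x ∈ X then g ⟨x, hx⟩ else x, fun x hx x' hx' hxx' => ?_,
    fun x hx => by simp [hx], fun x hx => by simpa [hx] using hgr ⟨x, hx⟩⟩
  simpa using congrArg Subtype.val (hg (Subtype.ext (by simpa [hx, hx'] using hxx')))

variable {V : Type*} {E : V → V → Prop}

theorem Adj.symm {u v : V} (h : Adj E u v) : Adj E v u := Or.symm h

theorem Stable.union {s t : Set V} (hs : Stable E s) (ht : Stable E t)
    (hst : ∀ u ∈ s, ∀ v ∈ t, u ≠ v → ¬ Adj E u v) : Stable E (s ∪ t) := by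
  rintro u (hu | hu) v (hv | hv) huv
  exacts [hs u hu v hv huv, hst u hu v hv huv, fun h => hst v hv u hu huv.symm h.symm,
    ht u hu v hv huv]

section PathPartition

variable {S W W₁ W₂ : Set V} {P P₁ P₂ : List (List V)}

theorem sPartOn_empty : SPartOn E ∅ S [] :=
  ⟨⟨by simp, by simp, by simp⟩, by simp [Orthogonal]⟩

theorem sPartOn_singleton {p : List V} (hp : IsPath E p) (hnd : p.Nodup)
    (hS : ∃! v, v ∈ p ∧ v ∈ S) (hW : ∀ v, v ∈ p ↔ v ∈ W) : SPartOn E W S [p] :=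
  ⟨⟨by simpa using hp, by simpa using hnd, by simpa using hW⟩, by simpa [Orthogonal] using hS⟩

theorem SPartOn.append (h₁ : SPartOn E W₁ S P₁) (h₂ : SPartOn E W₂ S P₂)
    (hW : Disjoint W₁ W₂) : SPartOn E (W₁ ∪ W₂) S (P₁ ++ P₂) := by
  obtain ⟨⟨hp₁, hnd₁, hW₁⟩, ho₁⟩ := h₁
  obtain ⟨⟨hp₂, hnd₂, hW₂⟩, ho₂⟩ := h₂
  refine ⟨⟨?_, ?_, fun v => by simp [hW₁, hW₂]⟩, ?_⟩
  · simpa [or_imp, forall_and] using ⟨hp₁, hp₂⟩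
  · rw [List.flatten_append, List.nodup_append]
    exact ⟨hnd₁, hnd₂, fun a ha b hb => hW.ne_of_mem ((hW₁ a).1 ha) ((hW₂ b).1 hb)⟩
  · simpa [Orthogonal, or_imp, forall_and] using ⟨ho₁, ho₂⟩

theorem SPartOn.congr_right {T : Set V} (h : SPartOn E W T P) (hST : ∀ v ∈ W, v ∈ S ↔ v ∈ T) :
    SPartOn E W S P := by
  refine ⟨h.1, fun p hp => ?_⟩
  have hpW : ∀ v ∈ p, v ∈ W := fun v hv => (h.1.2.2 v).1 (List.mem_flatten.2 ⟨p, hp, hv⟩)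
  obtain ⟨u, ⟨hup, huT⟩, huniq⟩ := h.2 p hp
  exact ⟨u, ⟨hup, (hST u (hpW u hup)).2 huT⟩,
    fun v hv => huniq v ⟨hv.1, (hST v (hpW v hv.1)).1 hv.2⟩⟩

theorem exists_sPartOn_of_subset [Finite V] {Y : Set V} (hY : Y ⊆ S) : ∃ P, SPartOn E Y S P := by
  induction Y, toFinite Y using Set.Finite.induction_on with
  | empty => exact ⟨[], sPartOn_empty⟩
  | @insert u Y huY _ ih =>
    obtain ⟨P, hP⟩ := ih ((subset_insert u Y).trans hY)
    have hu : SPartOn E {u} S [[u]] :=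
      sPartOn_singleton ⟨by simp, List.isChain_singleton u⟩ (List.nodup_singleton u)
        ⟨u, by simpa using hY (mem_insert u Y)⟩ (by simp)
    exact ⟨_, insert_eq u Y ▸ hu.append hP (disjoint_singleton_left.2 huY)⟩

theorem sPartOn_pair {x y : V} (hx : x ∉ S) (hy : y ∈ S) (hxy : Adj E x y) :
    ∃ P, SPartOn E {x, y} S P := by
  have hne : x ≠ y := fun h => hx (h ▸ hy)
  have horth : ∀ p : List V, (∀ v, v ∈ p ↔ v = x ∨ v = y) → ∃! v, v ∈ p ∧ v ∈ S := fun p hp =>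
    ⟨y, ⟨(hp y).2 (Or.inr rfl), hy⟩, fun v ⟨hv, hvS⟩ =>
      ((hp v).1 hv).resolve_left (by rintro rfl; exact hx hvS)⟩
  rcases hxy with h | h
  · exact ⟨_, sPartOn_singleton ⟨by simp, List.isChain_pair.2 h⟩ (by simpa using hne)
      (horth [x, y] (by simp)) (by simp)⟩
  · exact ⟨_, sPartOn_singleton ⟨by simp, List.isChain_pair.2 h⟩ (by simpa using hne.symm)
      (horth [y, x] (by simp [or_comm])) (by simp [or_comm])⟩

theorem exists_sPartOn_of_matching [Finite V] {X Y : Set V} {f : V → V} (hXS : Disjoint X S)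
    (hYS : Y ⊆ S) (hf : InjOn f X) (hfXY : MapsTo f X Y) (hadj : ∀ x ∈ X, Adj E x (f x)) :
    ∃ P, SPartOn E (X ∪ Y) S P := by
  induction X, toFinite X using Set.Finite.induction_on generalizing Y with
  | empty => simpa using exists_sPartOn_of_subset hYS
  | @insert x X hxX _ ih =>
    have hxS : x ∉ S := disjoint_left.1 hXS (mem_insert x X)
    have hfx : f x ∈ Y := hfXY (mem_insert x X)
    obtain ⟨P, hP⟩ := ih (Y := Y \ {f x}) (hXS.mono_left (subset_insert x X))
      (sdiff_subset.trans hYS) (hf.mono (subset_insert x X))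
      (fun x' hx' => ⟨hfXY (mem_insert_of_mem x hx'), fun h =>
        hxX (hf (mem_insert_of_mem x hx') (mem_insert x X) h ▸ hx')⟩)
      (fun x' hx' => hadj x' (mem_insert_of_mem x hx'))
    obtain ⟨Q, hQ⟩ := sPartOn_pair hxS (hYS hfx) (hadj x (mem_insert x X))
    refine ⟨Q ++ P, ?_⟩
    convert hQ.append hP ?_ using 1
    · ext v
      by_cases hv : v = f x <;> simp [hv, hfx, or_assoc]
    · have hfxX : f x ∉ X := fun h => disjoint_left.1 hXS (mem_insert_of_mem x h) (hYS hfx)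
      have hxY : x ∉ Y := fun h => hxS (hYS h)
      simp [disjoint_insert_left, hxX, hfxX, hxY]

end PathPartition

section Deficiency

variable {S A B C W : Set V}

def nbhdIn (E : V → V → Prop) (S B : Set V) : Set V := {u ∈ S | ∃ v ∈ B, Adj E v u}

noncomputable def deficiency (E : V → V → Prop) (S B : Set V) : ℤ :=
  B.ncard - (nbhdIn E S B).ncard

theorem nbhdIn_subset : nbhdIn E S B ⊆ S := fun _ hu => hu.1

@[simp] theorem nbhdIn_empty : nbhdIn E S ∅ = ∅ := by simp [nbhdIn]

theorem nbhdIn_union : nbhdIn E S (B ∪ C) = nbhdIn E S B ∪ nbhdIn E S C := by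
  ext u
  simp [nbhdIn, or_and_right, exists_or, and_or_left]

@[simp] theorem deficiency_empty : deficiency E S ∅ = 0 := by simp [deficiency]

theorem maxStableOn_nbhdIn [Finite V] (hS : MaxStableOn E W S) (hA : A ⊆ W \ S) :
    MaxStableOn E (A ∪ nbhdIn E S A) (nbhdIn E S A) := by
  obtain ⟨⟨hSW, hSst⟩, hmax⟩ := hS
  have hNS : nbhdIn E S A ⊆ S := nbhdIn_subset
  refine ⟨⟨subset_union_right, fun u hu v hv => hSst u (hNS hu) v (hNS hv)⟩, fun T hT => ?_⟩
  obtain ⟨hTAN, hTst⟩ := hT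
  have hdisj : Disjoint (S \ nbhdIn E S A) T := disjoint_left.2 fun u hu huT =>
    (hTAN huT).elim (fun huA => (hA huA).2 hu.1) hu.2
  have hST : StableOn E W (S \ nbhdIn E S A ∪ T) := by
    refine ⟨union_subset (sdiff_subset.trans hSW)
      (hTAN.trans (union_subset (hA.trans sdiff_subset) (hNS.trans hSW))),
      Stable.union (fun u hu v hv => hSst u hu.1 v hv.1) hTst ?_⟩
    rintro u ⟨huS, huN⟩ v hv huv hadj
    rcases hTAN hv with hvA | hvN
    · exact huN ⟨huS, v, hvA, hadj.symm⟩
    · exact hSst u huS v (hNS hvN) huv hadj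
  have h := hmax _ hST
  rw [ncard_union_eq hdisj, ncard_sdiff hNS] at h
  have := ncard_le_ncard hNS
  omega

theorem ncard_le_ncard_nbhdIn_sdiff [Finite V] {R : Set V} (hAR : A ⊆ R)
    (hmax : ∀ B ⊆ R, deficiency E S B ≤ deficiency E S A) (hB : B ⊆ R \ A) :
    B.ncard ≤ (nbhdIn E S B \ nbhdIn E S A).ncard := by
  have h := hmax (A ∪ B) (union_subset hAR (hB.trans sdiff_subset))
  rw [deficiency, deficiency, nbhdIn_union, ncard_union_eq (subset_sdiff.1 hB).2.symm,
    ← union_sdiff_self, ncard_union_eq disjoint_sdiff_right] at h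
  push_cast at h
  omega

theorem deficiency_nonpos_of_union_eq_univ [Finite V] (hAS : A ⊆ Sᶜ)
    (hcard : Sᶜ.ncard ≤ S.ncard) (hW : A ∪ nbhdIn E S A = univ) : deficiency E S A ≤ 0 := by
  have hSN : S ⊆ nbhdIn E S A := fun v hv =>
    (hW.symm ▸ mem_univ v : v ∈ A ∪ _).resolve_left fun hvA => hAS hvA hv
  have := ncard_le_ncard hAS
  have := ncard_le_ncard hSN
  simp only [deficiency]
  omega

end Deficiency

theorem exists_sPartOn_univ_of_isMax_deficiency [Finite V] {S A : Set V} {P : List (List V)}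
    (hAS : A ⊆ Sᶜ) (hmax : ∀ B ⊆ Sᶜ, deficiency E S B ≤ deficiency E S A)
    (hP : SPartOn E (A ∪ nbhdIn E S A) S P) : ∃ P, SPartOn E univ S P := by
  obtain ⟨f, hf, hfXY, hadj⟩ := exists_injOn_mapsTo_of_forall_ncard_le
    (X := Sᶜ \ A) (Y := S \ nbhdIn E S A) (Adj E) fun B hB => by
      convert ncard_le_ncard_nbhdIn_sdiff hAS hmax hB using 2
      ext v
      simp only [nbhdIn, mem_sdiff, mem_ofPred_eq]
      tauto
  obtain ⟨Q, hQ⟩ := exists_sPartOn_of_matching (disjoint_compl_left.mono_left sdiff_subset)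
    sdiff_subset hf hfXY hadj
  have hNS : nbhdIn E S A ⊆ S := nbhdIn_subset
  refine ⟨P ++ Q, ?_⟩
  convert hP.append hQ ?_ using 1
  · ext v
    simp only [mem_univ, mem_union, mem_sdiff, mem_compl_iff, true_iff]
    grind
  · simp only [disjoint_left, mem_union, mem_sdiff, mem_compl_iff]
    grind

end Paper

open Paper in
theorem stmt7 {V : Type*} [Fintype V] (E : V → V → Prop)
    (hind : ∀ W : Set V, W ≠ Set.univ → AlphaPropOn E W)
    (halpha : ∃ S : Set V, StableOn E Set.univ S ∧ Fintype.card V ≤ 2 * S.ncard) :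
    AlphaPropOn E Set.univ := by
  intro S hS
  have hRS : Sᶜ.ncard ≤ S.ncard := by
    obtain ⟨S₀, hS₀, hcard⟩ := halpha
    have := hS.2 S₀ hS₀
    have := ncard_add_ncard_compl S
    rw [Nat.card_eq_fintype_card] at this
    omega
  obtain ⟨A, hAS, hmax⟩ := exists_max_image {B | B ⊆ Sᶜ} (deficiency E S) (toFinite _)
    ⟨∅, empty_subset _⟩
  by_cases hW : A ∪ nbhdIn E S A = univ
  · refine exists_sPartOn_univ_of_isMax_deficiency (empty_subset _) (P := [])
      (fun B hB => (hmax B hB).trans ?_) (by simpa using sPartOn_empty)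
    simpa using deficiency_nonpos_of_union_eq_univ hAS hRS hW
  · obtain ⟨P, hP⟩ := hind _ hW _ (maxStableOn_nbhdIn hS (by rwa [← compl_eq_univ_sdiff]))
    exact exists_sPartOn_univ_of_isMax_deficiency hAS hmax
      (hP.congr_right fun v hv =>
        ⟨fun hvS => hv.resolve_left fun hvA => hAS hvA hvS, fun h => h.1⟩)
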